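/- arXiv:2204.14021 — 5 statements merged into one kernel-verified Lean document; each statement's English description precedes it below -/
import Mathlib

section
/- Let A be a complex (or real) Banach algebra with unit, let L ∈ A, and let T : ℝ → A be a function satisfying T(0) = 1, T(s+t) = T(s)·T(t) for all s, t ∈ ℝ, and such that T has derivative L at 0 (i.e., HasDerivAt T L 0). Then T(t) = exp(t·L) for every t ∈ ℝ, where exp is the exponential defined by the power series exp(B) = Σₙ Bⁿ/n!. -/
open NormedSpace

/-- A one-parameter semigroup (indeed group) `T : ℝ → A` in a Banach algebra with
`T 0 = 1`, `T (s+t) = T s * T t`, and derivative `L` at `0`, is the exponential of its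
generator: `T t = exp (t • L)`. -/
theorem semigroup_eq_exp_of_generator
    (A : Type*) [NormedRing A] [NormedAlgebra ℝ A] [CompleteSpace A]
    (L : A) (T : ℝ → A)
    (hT0 : T 0 = 1)
    (hTadd : ∀ s t : ℝ, T (s + t) = T s * T t)
    (hL : HasDerivAt T L 0) :
    ∀ t : ℝ, T t = exp (t • L) := by
  -- derivative of T at any point
  have hT' : ∀ t : ℝ, HasDerivAt T (T t * L) t := by
    intro t
    have h1 : HasDerivAt (fun h : ℝ => T t * T h) (T t * L) 0 := hL.const_mul (T t)
    have h2 : HasDerivAt (fun h : ℝ => T (t + h)) (T t * L) 0 := by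
      simpa [hTadd] using h1
    have h3 : HasDerivAt (fun s : ℝ => s - t) 1 t := (hasDerivAt_id t).sub_const t
    have h2' : HasDerivAt (fun h : ℝ => T (t + h)) (T t * L) (t + (-t)) := by
      simpa using h2
    have h4 := h2'.comp_add_const t (-t)
    have heq : (fun x : ℝ => T (t + (x + -t))) = T := by
      funext x; congr 1; ring
    rwa [heq] at h4
  set g : ℝ → A := fun t => exp (t • (-L)) with hg
  have hg' : ∀ t : ℝ, HasDerivAt g (g t * (-L)) t := fun t =>
    hasDerivAt_exp_smul_const (𝕂 := ℝ) (-L) t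
  have hcomm : ∀ t : ℝ, Commute L (g t) := fun t =>
    ((Commute.refl L).neg_right.smul_right t).exp_right
  set f : ℝ → A := fun t => T t * g t with hf
  have hf' : ∀ t : ℝ, HasDerivAt f 0 t := by
    intro t
    have := (hT' t).mul (hg' t)
    have hc : T t * L * g t + T t * (g t * -L) = 0 := by
      rw [mul_assoc, (hcomm t).eq, mul_neg, mul_neg, add_neg_cancel]
    rw [← hc]
    exact this
  have hconst : ∀ t : ℝ, f t = f 0 :=
    fun t => is_const_of_deriv_eq_zero (fun x => (hf' x).differentiableAt)
      (fun x => (hf' x).deriv) t 0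
  have hf0 : f 0 = 1 := by simp [hf, hg, hT0]
  intro t
  have key : T t * g t = 1 := (hconst t).trans hf0
  have hginv : g t * exp (t • L) = 1 := by
    have hc2 : Commute (t • (-L)) (t • L) :=
      Commute.smul_left (Commute.smul_right (Commute.neg_left (Commute.refl L)) t) t
    show exp (t • (-L)) * exp (t • L) = 1
    rw [← exp_add_of_commute_of_mem_ball (𝕂 := ℝ) hc2 (by simp [expSeries_radius_eq_top])
      (by simp [expSeries_radius_eq_top])]
    simp
  calc T t = T t * (g t * exp (t • L)) := by rw [hginv, mul_one]
    _ = T t * g t * exp (t • L) := by rw [mul_assoc]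
    _ = exp (t • L) := by rw [key, one_mul]
end

section
/- Let n ≥ 1 and let B₁, B₂ be n×n complex matrices such that every element λ of the spectrum of B₁ satisfies |Im(λ)| < π and every element μ of the spectrum of B₂ satisfies |Im(μ)| < π. If exp(B₁) = exp(B₂), then B₁ = B₂. That is, the principal logarithm—the logarithm with spectrum in the open strip {z ∈ ℂ : −π < Im z < π}—of a matrix is unique. -/
open NormedSpace Polynomial

namespace PrincipalLogAux

section Alg

variable {m : Type*} [Fintype m] [DecidableEq m]

lemma mem_spectrum_of_isRoot_charpoly {B : Matrix m m ℂ} {z : ℂ}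
    (h : (Matrix.charpoly B).IsRoot z) : z ∈ spectrum ℂ B := by
  rw [spectrum.mem_iff]
  intro hunit
  rw [Matrix.isUnit_iff_isUnit_det] at hunit
  have hdet : (algebraMap ℂ (Matrix m m ℂ) z - B).det = (Matrix.charpoly B).eval z := by
    rw [Matrix.charpoly, Polynomial.eval, ← Polynomial.coe_eval₂RingHom, RingHom.map_det]
    congr 1
    ext i j
    by_cases hij : i = j <;>
      simp [hij, Matrix.charmatrix_apply, Matrix.algebraMap_matrix_apply,
        Matrix.diagonal, Matrix.sub_apply]
  rw [hdet, h.eq_zero] at hunit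
  exact hunit.ne_zero rfl

lemma sylvester {B₁ B₂ w : Matrix m m ℂ} {z : ℂ} (hw : w ≠ 0)
    (h : B₁ * w - w * B₂ = z • w) :
    ∃ l ∈ spectrum ℂ B₁, ∃ mu ∈ spectrum ℂ B₂, z = l - mu := by
  classical
  set C : Matrix m m ℂ := z • 1 + B₂ with hC
  have hBw : B₁ * w = w * C := by
    rw [sub_eq_iff_eq_add] at h
    rw [hC, mul_add, mul_smul_comm, mul_one, h, add_comm]
  have hpow : ∀ k : ℕ, B₁ ^ k * w = w * C ^ k := by
    intro k; induction k with
    | zero => simp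
    | succ k ih =>
        rw [pow_succ, pow_succ, mul_assoc, hBw, ← mul_assoc, ih, mul_assoc]
  have key : ∀ p : ℂ[X], Polynomial.aeval B₁ p * w = w * Polynomial.aeval C p := by
    intro p
    induction p using Polynomial.induction_on' with
    | add p q hp hq => simp only [map_add, add_mul, mul_add, hp, hq]
    | monomial k a =>
        simp only [Polynomial.aeval_monomial]
        rw [mul_assoc, hpow, ← mul_assoc, Algebra.commutes a w, mul_assoc]
  have hw0 : w * Polynomial.aeval C (Matrix.charpoly B₁) = 0 := by
    rw [← key, Matrix.aeval_self_charpoly, zero_mul]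
  have hnu : ¬ IsUnit (Polynomial.aeval C (Matrix.charpoly B₁)) := by
    intro hu
    obtain ⟨u, hu'⟩ := hu
    apply hw
    have : w * (Polynomial.aeval C (Matrix.charpoly B₁) * (↑u⁻¹ : Matrix m m ℂ)) = 0 := by
      rw [← mul_assoc, hw0, zero_mul]
    rwa [← hu', Units.mul_inv, mul_one] at this
  have hsplit : Matrix.charpoly B₁ =
      (Multiset.map (fun x : ℂ => X - Polynomial.C x) (Matrix.charpoly B₁).roots).prod :=
    (IsAlgClosed.splits _).eq_prod_roots_of_monic (Matrix.charpoly_monic B₁)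
  have hnu' : ¬ IsUnit (Polynomial.aeval C
      (Multiset.map (fun x : ℂ => X - Polynomial.C x) (Matrix.charpoly B₁).roots).prod) := by
    rw [← hsplit]; exact hnu
  obtain ⟨l, hl, hlroot⟩ :=
    spectrum.exists_mem_of_not_isUnit_aeval_prod (p := Matrix.charpoly B₁) hnu'
  refine ⟨l, mem_spectrum_of_isRoot_charpoly hlroot, l - z, ?_, by ring⟩
  rw [spectrum.mem_iff] at hl ⊢
  intro hu; apply hl
  have heq : algebraMap ℂ (Matrix m m ℂ) l - C =
      algebraMap ℂ (Matrix m m ℂ) (l - z) - B₂ := by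
    rw [hC, Algebra.algebraMap_eq_smul_one, Algebra.algebraMap_eq_smul_one, sub_smul]
    abel
  rw [heq]; exact hu

end Alg

section Analytic

variable {A : Type*} [NormedRing A] [NormedAlgebra ℂ A] [CompleteSpace A]

lemma summable_aux (a : A) :
    Summable fun k : ℕ => ((k + 1).factorial⁻¹ : ℂ) • a ^ k := by
  refine .of_norm_bounded_eventually (Real.summable_pow_div_factorial ‖a‖) ?_
  filter_upwards [Filter.eventually_cofinite_ne 0] with k hk
  rw [norm_smul, mul_comm, norm_inv, RCLike.norm_natCast, ← div_eq_mul_inv]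
  exact div_le_div₀ (pow_nonneg (norm_nonneg _) k) (norm_pow_le' a (zero_lt_iff.mpr hk))
    (mod_cast Nat.factorial_pos k) (mod_cast Nat.factorial_le (lt_add_one k).le)

lemma exp_factor (a : A) :
    exp a = 1 + (∑' k : ℕ, ((k + 1).factorial⁻¹ : ℂ) • a ^ k) * a := by
  have hb := summable_aux a
  have h₁ : (∑' k : ℕ, ((k + 1).factorial⁻¹ : ℂ) • a ^ (k + 1)) =
      (∑' k : ℕ, ((k + 1).factorial⁻¹ : ℂ) • a ^ k) * a := by
    simpa only [pow_succ, Algebra.smul_mul_assoc] using hb.tsum_mul_right a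
  rw [exp_eq_tsum ℂ]; dsimp only
  rw [Summable.tsum_eq_zero_add (expSeries_summable' (𝕂 := ℂ) a)]
  rw [h₁]; simp

lemma exp_factor' (a : A) :
    exp a = 1 + a * ∑' k : ℕ, ((k + 1).factorial⁻¹ : ℂ) • a ^ k := by
  have hb := summable_aux a
  have h₀ : (∑' k : ℕ, ((k + 1).factorial⁻¹ : ℂ) • a ^ (k + 1)) =
      a * ∑' k : ℕ, ((k + 1).factorial⁻¹ : ℂ) • a ^ k := by
    simpa only [mul_smul_comm, pow_succ'] using hb.tsum_mul_left a
  rw [exp_eq_tsum ℂ]; dsimp only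
  rw [Summable.tsum_eq_zero_add (expSeries_summable' (𝕂 := ℂ) a)]
  rw [h₀]; simp

lemma hval_ne_zero {c : ℂ} (hc : |c.im| < 2 * Real.pi) :
    (∑' k : ℕ, ((k + 1).factorial⁻¹ : ℂ) • c ^ k) ≠ 0 := by
  rcases eq_or_ne c 0 with rfl | hc0
  · rw [tsum_eq_single 0 (by intro k hk; simp [zero_pow hk])]
    simp
  · intro h0
    have h2 := exp_factor (A := ℂ) c
    rw [h0, zero_mul, add_zero] at h2
    have hexp1 : Complex.exp c = 1 := by rw [Complex.exp_eq_exp_ℂ]; exact h2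
    obtain ⟨k, hk⟩ := Complex.exp_eq_one_iff.mp hexp1
    have him : c.im = k * (2 * Real.pi) := by
      rw [hk]; simp [Complex.mul_im]
    have hk0 : k ≠ 0 := by
      rintro rfl; apply hc0; simpa using hk
    have : (2 : ℝ) * Real.pi ≤ |c.im| := by
      rw [him, abs_mul, abs_of_pos (by positivity : (0:ℝ) < 2 * Real.pi)]
      have h1 : (1 : ℝ) ≤ |(k : ℝ)| := by
        rw [← Int.cast_abs]
        exact_mod_cast Int.one_le_abs hk0
      nlinarith [Real.pi_pos]
    linarith

end Analytic


section Operator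

variable {E : Type*} [NormedAddCommGroup E] [NormedSpace ℂ E] [CompleteSpace E]

lemma exp_sub_of_comm (L R : E →L[ℂ] E) (h : ∀ z, L (R z) = R (L z)) :
    exp (L - R) = exp L * exp (-R) := by
  have hcomm : L * R = R * L := ContinuousLinearMap.ext h
  rw [sub_eq_add_neg]
  exact exp_add_of_commute_of_mem_ball (𝕂 := ℂ) (Commute.neg_right hcomm)
    ((expSeries_radius_eq_top ℂ (E →L[ℂ] E)).symm ▸ edist_lt_top _ _)
    ((expSeries_radius_eq_top ℂ (E →L[ℂ] E)).symm ▸ edist_lt_top _ _)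

lemma op_key [FiniteDimensional ℂ E] (S : E →L[ℂ] E)
    (hstrip : ∀ (c : ℂ) (v : E), v ≠ 0 → S v = c • v → |c.im| < 2 * Real.pi)
    (x : E) (hfix : exp S x = x) : S x = 0 := by
  classical
  set b : E →L[ℂ] E := ∑' k : ℕ, ((k + 1).factorial⁻¹ : ℂ) • S ^ k with hb
  have hfac := exp_factor S
  have hfac' := exp_factor' S
  have hcommbS : b * S = S * b := add_left_cancel (hfac.symm.trans hfac')
  have hbSx : b (S x) = 0 := by
    have h3 : (1 + b * S) x = x := by rw [← hfac]; exact hfix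
    have h4 : (1 + b * S) x = x + b (S x) := by
      rw [ContinuousLinearMap.add_apply, ContinuousLinearMap.one_apply,
        ContinuousLinearMap.mul_apply]
    rw [h4] at h3
    exact add_eq_left.mp h3
  have hker : LinearMap.ker (b : E →ₗ[ℂ] E) = ⊥ := by
    by_contra hbot
    haveI : Nontrivial (LinearMap.ker (b : E →ₗ[ℂ] E)) := Submodule.nontrivial_iff_ne_bot.mpr hbot
    have hinv : ∀ y ∈ LinearMap.ker (b : E →ₗ[ℂ] E), (S : E →ₗ[ℂ] E) y ∈ LinearMap.ker (b : E →ₗ[ℂ] E) := by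
      intro y hy
      rw [LinearMap.mem_ker] at hy ⊢
      have hbs : b (S y) = S (b y) := by
        calc b (S y) = (b * S) y := rfl
          _ = (S * b) y := by rw [hcommbS]
          _ = S (b y) := rfl
      show b (S y) = 0
      rw [hbs]
      show S (b y) = 0
      rw [show b y = 0 from hy, map_zero]
    set Sres : Module.End ℂ (LinearMap.ker (b : E →ₗ[ℂ] E)) :=
      LinearMap.restrict (S : E →ₗ[ℂ] E) hinv with hSres
    obtain ⟨c, hc⟩ := Module.End.exists_eigenvalue Sres
    obtain ⟨v, hv⟩ := hc.exists_hasEigenvector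
    have hw0 : (v : E) ≠ 0 := by
      intro h
      exact hv.right (Subtype.ext h)
    have hSw : S (v : E) = c • (v : E) := by
      have h2 := congrArg (Subtype.val) hv.apply_eq_smul
      rw [LinearMap.restrict_coe_apply] at h2
      exact h2
    have him : |c.im| < 2 * Real.pi := hstrip c (v : E) hw0 hSw
    have hpowS : ∀ k : ℕ, (S ^ k) (v : E) = c ^ k • (v : E) := by
      intro k; induction k with
      | zero => simp
      | succ k ih =>
          rw [pow_succ', ContinuousLinearMap.mul_apply, ih, map_smul, hSw, smul_smul, ← pow_succ]
    have hbv : b (v : E) = (∑' k : ℕ, ((k + 1).factorial⁻¹ : ℂ) • c ^ k) • (v : E) := by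
      have h1 : b (v : E) = ∑' k : ℕ, (((k + 1).factorial⁻¹ : ℂ) • S ^ k) (v : E) :=
        (ContinuousLinearMap.apply ℂ E (v : E)).map_tsum (summable_aux S)
      have h2 : ∀ k : ℕ, (((k + 1).factorial⁻¹ : ℂ) • S ^ k) (v : E)
          = (((k + 1).factorial⁻¹ : ℂ) • c ^ k) • (v : E) := by
        intro k
        rw [ContinuousLinearMap.smul_apply, hpowS, smul_smul, smul_eq_mul]
      rw [h1, tsum_congr h2, (summable_aux (A := ℂ) c).tsum_smul_const _]
    have hv0 : b (v : E) = 0 := v.2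
    rw [hbv] at hv0
    rcases smul_eq_zero.mp hv0 with h | h
    · exact hval_ne_zero him h
    · exact hw0 h
  have hmem : S x ∈ LinearMap.ker (b : E →ₗ[ℂ] E) := LinearMap.mem_ker.mpr hbSx
  rwa [hker, Submodule.mem_bot] at hmem

end Operator

section OpExp

variable {A : Type*} [NormedRing A] [NormedAlgebra ℂ A] [CompleteSpace A]

lemma exp_opL (a : A) (L : A →L[ℂ] A) (hL : ∀ y, L y = a * y) (x : A) :
    exp L x = exp a * x := by
  have hLpow : ∀ (k : ℕ) (y : A), (L ^ k) y = a ^ k * y := by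
    intro k; induction k with
    | zero => intro y; simp
    | succ k ih =>
        intro y
        rw [pow_succ', ContinuousLinearMap.mul_apply, ih, hL, pow_succ', mul_assoc]
  have h1 : exp L x = ∑' k : ℕ, (((k.factorial : ℂ))⁻¹ • L ^ k) x := by
    rw [exp_eq_tsum ℂ]; dsimp only
    exact (ContinuousLinearMap.apply ℂ A x).map_tsum (expSeries_summable' (𝕂 := ℂ) L)
  have h2 : ∀ k : ℕ, (((k.factorial : ℂ))⁻¹ • L ^ k) x = ((k.factorial : ℂ))⁻¹ • a ^ k * x := by
    intro k
    rw [ContinuousLinearMap.smul_apply, hLpow, smul_mul_assoc]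
  rw [h1, tsum_congr h2, (expSeries_summable' (𝕂 := ℂ) a).tsum_mul_right x, exp_eq_tsum ℂ]

lemma exp_opR (a : A) (R : A →L[ℂ] A) (hR : ∀ y, R y = y * a) (x : A) :
    exp R x = x * exp a := by
  have hRpow : ∀ (k : ℕ) (y : A), (R ^ k) y = y * a ^ k := by
    intro k; induction k with
    | zero => intro y; simp
    | succ k ih =>
        intro y
        rw [pow_succ', ContinuousLinearMap.mul_apply, ih, hR, pow_succ, mul_assoc]
  have h1 : exp R x = ∑' k : ℕ, (((k.factorial : ℂ))⁻¹ • R ^ k) x := by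
    rw [exp_eq_tsum ℂ]; dsimp only
    exact (ContinuousLinearMap.apply ℂ A x).map_tsum (expSeries_summable' (𝕂 := ℂ) R)
  have h2 : ∀ k : ℕ, (((k.factorial : ℂ))⁻¹ • R ^ k) x = x * ((k.factorial : ℂ))⁻¹ • a ^ k := by
    intro k
    rw [ContinuousLinearMap.smul_apply, hRpow, mul_smul_comm]
  rw [h1, tsum_congr h2, (expSeries_summable' (𝕂 := ℂ) a).tsum_mul_left x, exp_eq_tsum ℂ]

lemma exp_mul_exp_neg (a : A) : exp a * exp (-a) = 1 := by
  have h := exp_add_of_commute_of_mem_ball (𝕂 := ℂ) (Commute.neg_right (Commute.refl a))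
    ((expSeries_radius_eq_top ℂ A).symm ▸ edist_lt_top _ _)
    ((expSeries_radius_eq_top ℂ A).symm ▸ edist_lt_top _ _)
  rw [add_neg_cancel, exp_zero] at h
  exact h.symm

end OpExp

end PrincipalLogAux

open PrincipalLogAux

set_option maxHeartbeats 1000000 in
/-- Uniqueness of the principal matrix logarithm: if `B₁` and `B₂` both have spectrum in
the open strip `{z : ℂ | |Im z| < π}` and `exp B₁ = exp B₂`, then `B₁ = B₂`. -/
theorem principal_matrix_log_unique
    (n : ℕ) (hn : 1 ≤ n) (B₁ B₂ : Matrix (Fin n) (Fin n) ℂ)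
    (h₁ : ∀ μ ∈ spectrum ℂ B₁, |μ.im| < Real.pi)
    (h₂ : ∀ μ ∈ spectrum ℂ B₂, |μ.im| < Real.pi)
    (hexp : exp B₁ = exp B₂) :
    B₁ = B₂ := by
  classical
  letI : NormedRing (Matrix (Fin n) (Fin n) ℂ) := Matrix.linftyOpNormedRing
  letI : NormedAlgebra ℂ (Matrix (Fin n) (Fin n) ℂ) := Matrix.linftyOpNormedAlgebra
  letI : NormedRing (Matrix (Fin n) (Fin n) ℂ →L[ℂ] Matrix (Fin n) (Fin n) ℂ) :=
    ContinuousLinearMap.toNormedRing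
  letI : IsTopologicalRing (Matrix (Fin n) (Fin n) ℂ →L[ℂ] Matrix (Fin n) (Fin n) ℂ) :=
    NonUnitalSeminormedRing.toIsTopologicalRing
  set L : Matrix (Fin n) (Fin n) ℂ →L[ℂ] Matrix (Fin n) (Fin n) ℂ :=
    LinearMap.toContinuousLinearMap (LinearMap.mulLeft ℂ B₁) with hL
  set R : Matrix (Fin n) (Fin n) ℂ →L[ℂ] Matrix (Fin n) (Fin n) ℂ :=
    LinearMap.toContinuousLinearMap (LinearMap.mulRight ℂ B₂) with hR
  set S : Matrix (Fin n) (Fin n) ℂ →L[ℂ] Matrix (Fin n) (Fin n) ℂ := L - R with hS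
  have hSapp : ∀ x : Matrix (Fin n) (Fin n) ℂ, S x = B₁ * x - x * B₂ := fun x => rfl
  have hfix : exp S (1 : Matrix (Fin n) (Fin n) ℂ) = 1 := by
    have h1 := exp_sub_of_comm L R (fun z => (mul_assoc B₁ z B₂).symm)
    replace h1 : exp S = exp L * exp (-R) := h1
    rw [h1, ContinuousLinearMap.mul_apply]
    have h3 : -R = LinearMap.toContinuousLinearMap (LinearMap.mulRight ℂ (-B₂)) :=
      ContinuousLinearMap.ext fun x => (mul_neg x B₂).symm
    rw [h3]
    erw [exp_opR (-B₂) (LinearMap.toContinuousLinearMap (LinearMap.mulRight ℂ (-B₂)))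
      (fun y => rfl) 1]
    rw [one_mul]
    erw [exp_opL B₁ L (fun y => rfl)]
    erw [hexp]
    erw [exp_mul_exp_neg B₂]
  have hstrip : ∀ (c : ℂ) (v : Matrix (Fin n) (Fin n) ℂ), v ≠ 0 → S v = c • v
      → |c.im| < 2 * Real.pi := by
    intro c v hv0 hSv
    rw [hSapp] at hSv
    obtain ⟨l, hl, mu, hmu, hc_eq⟩ := sylvester hv0 hSv
    have hb1 := h₁ l hl
    have hb2 := h₂ mu hmu
    rw [hc_eq]
    calc |(l - mu).im| = |l.im - mu.im| := by rw [Complex.sub_im]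
      _ ≤ |l.im| + |mu.im| := abs_sub l.im mu.im
      _ < 2 * Real.pi := by linarith
  have hS1 : S (1 : Matrix (Fin n) (Fin n) ℂ) = 0 := op_key S hstrip 1 hfix
  rw [hSapp] at hS1
  rw [mul_one, one_mul, sub_eq_zero] at hS1
  exact hS1
end

section
/- Let E be a complex Banach space and let A, B : E → E be continuous linear operators such that every element λ of the spectrum of A satisfies |Im(λ)| < π and every element μ of the spectrum of B satisfies |Im(μ)| < π. If exp(A) = exp(B), then A = B. That is, a bounded operator on a complex Banach space has at most one logarithm with spectrum in the open strip {z ∈ ℂ : −π < Im z < π} (the principal logarithm). -/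
set_option maxHeartbeats 1000000
set_option synthInstance.maxHeartbeats 200000


open NormedSpace

namespace PrincipalLogUnique

variable {𝒜 : Type*} [NormedRing 𝒜] [NormedAlgebra ℂ 𝒜] [CompleteSpace 𝒜]

/-- Auxiliary entire function `g(c) = ∑ cⁿ/(n+1)!`, so that `exp c = 1 + c * g c`. -/
noncomputable def logAux (c : 𝒜) : 𝒜 := ∑' n : ℕ, ((n + 1).factorial⁻¹ : ℂ) • c ^ n

lemma logAux_summable (c : 𝒜) :
    Summable fun n : ℕ => ((n + 1).factorial⁻¹ : ℂ) • c ^ n := by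
  refine .of_norm_bounded_eventually (Real.summable_pow_div_factorial ‖c‖) ?_
  filter_upwards [Filter.eventually_cofinite_ne 0] with n hn
  rw [norm_smul, mul_comm, norm_inv, RCLike.norm_natCast, ← div_eq_mul_inv]
  exact div_le_div₀ (pow_nonneg (norm_nonneg _) n) (norm_pow_le' c (zero_lt_iff.mpr hn))
    (mod_cast Nat.factorial_pos n) (mod_cast Nat.factorial_le (lt_add_one n).le)

lemma exp_eq_one_add_mul (c : 𝒜) : exp c = 1 + c * logAux c := by
  have h₀ : (∑' n : ℕ, ((n + 1).factorial⁻¹ : ℂ) • c ^ (n + 1)) = c * logAux c := by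
    simpa only [mul_smul_comm, pow_succ', logAux] using (logAux_summable c).tsum_mul_left c
  rw [exp_eq_tsum ℂ]
  convert Summable.tsum_eq_zero_add (expSeries_summable' (𝕂 := ℂ) c)
  · simp only [Nat.factorial_zero, Nat.cast_one, inv_one, pow_zero, one_smul]
  · exact h₀.symm

lemma commute_logAux (c : 𝒜) : Commute c (logAux c) := by
  have h₀ : (∑' n : ℕ, ((n + 1).factorial⁻¹ : ℂ) • c ^ (n + 1)) = c * logAux c := by
    simpa only [mul_smul_comm, pow_succ', logAux] using (logAux_summable c).tsum_mul_left c
  have h₁ : (∑' n : ℕ, ((n + 1).factorial⁻¹ : ℂ) • c ^ (n + 1)) = logAux c * c := by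
    simpa only [pow_succ, Algebra.smul_mul_assoc, logAux] using (logAux_summable c).tsum_mul_right c
  exact h₀.symm.trans h₁

lemma logAux_complex_ne_zero {z : ℂ} (hz : |z.im| < 2 * Real.pi) : logAux z ≠ 0 := by
  rcases eq_or_ne z 0 with rfl | hz0
  · have : logAux (0 : ℂ) = 1 := by
      rw [logAux, tsum_eq_single 0 (fun n hn => by simp [zero_pow hn])]
      simp
    simp [this]
  · intro h
    have hexp : exp z = 1 := by rw [exp_eq_one_add_mul z, h, mul_zero, add_zero]
    rw [← Complex.exp_eq_exp_ℂ] at hexp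
    obtain ⟨n, hn⟩ := Complex.exp_eq_one_iff.mp hexp
    have hn0 : n ≠ 0 := by
      rintro rfl
      simp at hn
      exact hz0 hn
    have him : z.im = n * (2 * Real.pi) := by
      rw [hn]
      simp [Complex.mul_im, Complex.mul_re]
    rw [him, abs_mul, abs_of_nonneg (by positivity : (0:ℝ) ≤ 2 * Real.pi)] at hz
    have : (1 : ℝ) ≤ |(n : ℝ)| := by
      rw [← Int.cast_abs]
      exact_mod_cast Int.one_le_abs hn0
    nlinarith [Real.pi_pos]

/-! ### The bicommutant -/

/-- The bicommutant of a set, as a subalgebra. -/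
def bico (s : Set 𝒜) : Subalgebra ℂ 𝒜 := Subalgebra.centralizer ℂ (Set.centralizer s)

lemma mem_bico {s : Set 𝒜} {x : 𝒜} :
    x ∈ bico s ↔ ∀ g ∈ Set.centralizer s, g * x = x * g :=
  Subalgebra.mem_centralizer_iff ℂ

lemma subset_bico (s : Set 𝒜) : s ⊆ (bico s : Set 𝒜) := by
  intro x hx
  rw [SetLike.mem_coe, mem_bico]
  exact fun g hg => (hg x hx).symm

lemma isClosed_bico (s : Set 𝒜) : IsClosed (bico s : Set 𝒜) := by
  have : (bico s : Set 𝒜) = ⋂ g ∈ Set.centralizer s, {x : 𝒜 | g * x = x * g} := by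
    ext x
    simp only [SetLike.mem_coe, mem_bico, Set.mem_iInter, Set.mem_setOf_eq]
  rw [this]
  exact isClosed_biInter fun g _ =>
    isClosed_eq (continuous_const.mul continuous_id) (continuous_id.mul continuous_const)

lemma bico_mul_comm {s : Set 𝒜} (hs : ∀ x ∈ s, ∀ y ∈ s, Commute x y)
    {x y : 𝒜} (hx : x ∈ bico s) (hy : y ∈ bico s) : x * y = y * x := by
  have hsc : s ⊆ Set.centralizer s := fun a ha =>
    Set.mem_centralizer_iff.mpr fun m hm => hs m hm a ha
  have hy' : y ∈ Set.centralizer s := by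
    have : (bico s : Set 𝒜) = Set.centralizer (Set.centralizer s) :=
      Subalgebra.coe_centralizer ℂ _
    have := Set.centralizer_subset hsc (by rw [← this]; exact hy)
    exact this
  exact (mem_bico.mp hx y hy').symm

lemma bico_inv_mem {s : Set 𝒜} {x : 𝒜} (hx : x ∈ bico s) (hu : IsUnit x) :
    (↑hu.unit⁻¹ : 𝒜) ∈ bico s := by
  rw [mem_bico] at hx ⊢
  intro g hg
  have h1 : g * x = x * g := hx g hg
  rw [← hu.unit_spec] at h1
  have h2 : (↑hu.unit⁻¹ : 𝒜) * (g * ↑hu.unit) * ↑hu.unit⁻¹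
      = ↑hu.unit⁻¹ * (↑hu.unit * g) * ↑hu.unit⁻¹ := by rw [h1]
  simpa only [mul_assoc, Units.mul_inv, mul_one, Units.inv_mul_cancel_left] using h2.symm

lemma bico_isUnit {s : Set 𝒜} (x : ↥(bico s)) (hu : IsUnit (x : 𝒜)) : IsUnit x := by
  refine isUnit_iff_exists.mpr ⟨⟨(↑hu.unit⁻¹ : 𝒜), bico_inv_mem x.2 hu⟩, ?_, ?_⟩
  · exact Subtype.ext hu.mul_val_inv
  · exact Subtype.ext hu.val_inv_mul

lemma spectrum_bico {s : Set 𝒜} (x : ↥(bico s)) :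
    spectrum ℂ x = spectrum ℂ (x : 𝒜) := by
  ext z
  rw [spectrum.mem_iff, spectrum.mem_iff, not_iff_not]
  constructor
  · intro h
    have := h.map (bico s).val
    simpa [map_sub] using this
  · intro h
    refine bico_isUnit _ ?_
    simpa [map_sub] using h

/-! ### Invertibility of `logAux (a - b)` -/

lemma isUnit_logAux {a b : 𝒜} (hab : Commute a b)
    (ha : ∀ z ∈ spectrum ℂ a, |z.im| < Real.pi)
    (hb : ∀ z ∈ spectrum ℂ b, |z.im| < Real.pi) :
    IsUnit (logAux (a - b)) := by
  set s : Set 𝒜 := {a, b} with hs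
  set S := bico s with hS
  haveI : CompleteSpace ↥S := (isClosed_bico s).completeSpace_coe
  letI : NormedCommRing ↥S :=
    { (inferInstance : NormedRing ↥S) with
      mul_comm := fun x y => Subtype.ext
        (bico_mul_comm (by
          rintro u (rfl | ⟨rfl⟩) v (rfl | ⟨rfl⟩)
          · exact Commute.refl _
          · exact hab
          · exact hab.symm
          · exact Commute.refl _) x.2 y.2) }
  have haS : a ∈ S := subset_bico s (by simp [hs])
  have hbS : b ∈ S := subset_bico s (by simp [hs])
  set aS : ↥S := ⟨a, haS⟩
  set bS : ↥S := ⟨b, hbS⟩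
  set cS : ↥S := aS - bS with hcS
  have hcoe : ((logAux cS : ↥S) : 𝒜) = logAux (a - b) := by
    have h2 := (logAux_summable cS).hasSum.map
      (AddMonoidHomClass.toAddMonoidHom S.val) continuous_subtype_val
    have h3 : HasSum (fun n : ℕ => ((n + 1).factorial⁻¹ : ℂ) • (a - b) ^ n)
        ((logAux cS : ↥S) : 𝒜) := by
      convert h2 using 1 <;> rfl
    exact h3.tsum_eq.symm
  by_contra h
  have h0 : ¬ IsUnit (logAux cS) := by
    intro hu
    exact h (hcoe ▸ hu.map S.val)
  have h0' : (0 : ℂ) ∈ spectrum ℂ (logAux cS) := by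
    rw [spectrum.zero_mem_iff]; exact h0
  obtain ⟨φ, hφ⟩ := WeakDual.CharacterSpace.mem_spectrum_iff_exists.mp h0'
  have hmap : φ (logAux cS) = logAux (φ cS) := by
    calc φ (logAux cS) = ∑' n : ℕ, φ (((n + 1).factorial⁻¹ : ℂ) • cS ^ n) := by
          simpa [WeakDual.CharacterSpace.coe_toCLM, logAux] using
            (WeakDual.CharacterSpace.toCLM φ).map_tsum (logAux_summable cS)
      _ = ∑' n : ℕ, ((n + 1).factorial⁻¹ : ℂ) • (φ cS) ^ n := by
          congr 1
          funext n
          rw [map_smul, map_pow]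
      _ = logAux (φ cS) := rfl
  have hza : φ aS ∈ spectrum ℂ a :=
    spectrum_bico aS ▸ WeakDual.CharacterSpace.apply_mem_spectrum φ aS
  have hzb : φ bS ∈ spectrum ℂ b :=
    spectrum_bico bS ▸ WeakDual.CharacterSpace.apply_mem_spectrum φ bS
  have him : |(φ cS).im| < 2 * Real.pi := by
    have : φ cS = φ aS - φ bS := by rw [hcS, map_sub]
    rw [this, Complex.sub_im]
    calc |(φ aS).im - (φ bS).im| ≤ |(φ aS).im| + |(φ bS).im| := abs_sub _ _
      _ < Real.pi + Real.pi := add_lt_add (ha _ hza) (hb _ hzb)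
      _ = 2 * Real.pi := by ring
  exact logAux_complex_ne_zero him (hmap ▸ hφ)

/-! ### Left and right multiplication operators -/

lemma spectrum_mulLeft (a : 𝒜) :
    spectrum ℂ (ContinuousLinearMap.mul ℂ 𝒜 a) ⊆ spectrum ℂ a := by
  intro z hz
  rw [spectrum.mem_iff] at hz ⊢
  intro hu
  refine hz ?_
  obtain ⟨u, hu⟩ := hu
  have key : algebraMap ℂ (𝒜 →L[ℂ] 𝒜) z - ContinuousLinearMap.mul ℂ 𝒜 a
      = ContinuousLinearMap.mul ℂ 𝒜 (algebraMap ℂ 𝒜 z - a) := by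
    ext x
    simp [Algebra.algebraMap_eq_smul_one, smul_mul_assoc]
  rw [key]
  refine isUnit_iff_exists.mpr ⟨ContinuousLinearMap.mul ℂ 𝒜 (↑u⁻¹ : 𝒜), ?_, ?_⟩ <;>
    · ext x
      simp only [ContinuousLinearMap.mul_apply, ContinuousLinearMap.mul_apply',
        ContinuousLinearMap.one_apply, ← mul_assoc, ← hu]
      simp

lemma spectrum_mulRight (a : 𝒜) :
    spectrum ℂ ((ContinuousLinearMap.mul ℂ 𝒜).flip a) ⊆ spectrum ℂ a := by
  intro z hz
  rw [spectrum.mem_iff] at hz ⊢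
  intro hu
  refine hz ?_
  obtain ⟨u, hu⟩ := hu
  have key : algebraMap ℂ (𝒜 →L[ℂ] 𝒜) z - (ContinuousLinearMap.mul ℂ 𝒜).flip a
      = (ContinuousLinearMap.mul ℂ 𝒜).flip (algebraMap ℂ 𝒜 z - a) := by
    ext x
    simp [ContinuousLinearMap.flip_apply, Algebra.algebraMap_eq_smul_one, mul_sub,
      mul_smul_comm]
  rw [key]
  refine isUnit_iff_exists.mpr ⟨(ContinuousLinearMap.mul ℂ 𝒜).flip (↑u⁻¹ : 𝒜), ?_, ?_⟩ <;>
    · ext x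
      simp only [ContinuousLinearMap.mul_apply, ContinuousLinearMap.flip_apply,
        ContinuousLinearMap.mul_apply', ContinuousLinearMap.one_apply, mul_assoc, ← hu]
      simp

lemma exp_apply (T : 𝒜 →L[ℂ] 𝒜) (x : 𝒜) :
    exp T x = ∑' n : ℕ, ((n.factorial)⁻¹ : ℂ) • (T ^ n) x := by
  have h := (ContinuousLinearMap.apply ℂ 𝒜 x).map_tsum (expSeries_summable' (𝕂 := ℂ) T)
  simp only [ContinuousLinearMap.apply_apply, map_smul, ContinuousLinearMap.smul_apply] at h
  rw [exp_eq_tsum ℂ]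
  exact h

lemma pow_mulLeft (a : 𝒜) (n : ℕ) (x : 𝒜) :
    ((ContinuousLinearMap.mul ℂ 𝒜 a) ^ n) x = a ^ n * x := by
  induction n with
  | zero => simp
  | succ n ih =>
    have h1 : ((ContinuousLinearMap.mul ℂ 𝒜 a) ^ (n + 1)) x
        = (ContinuousLinearMap.mul ℂ 𝒜 a) (((ContinuousLinearMap.mul ℂ 𝒜 a) ^ n) x) := by
      rw [pow_succ']
      rfl
    rw [h1, ih, ContinuousLinearMap.mul_apply', ← mul_assoc, ← pow_succ']

lemma pow_mulRight (a : 𝒜) (n : ℕ) (x : 𝒜) :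
    (((ContinuousLinearMap.mul ℂ 𝒜).flip a) ^ n) x = x * a ^ n := by
  induction n with
  | zero => simp
  | succ n ih =>
    have h1 : (((ContinuousLinearMap.mul ℂ 𝒜).flip a) ^ (n + 1)) x
        = ((ContinuousLinearMap.mul ℂ 𝒜).flip a)
            ((((ContinuousLinearMap.mul ℂ 𝒜).flip a) ^ n) x) := by
      rw [pow_succ']
      rfl
    rw [h1, ih, ContinuousLinearMap.flip_apply, ContinuousLinearMap.mul_apply',
      mul_assoc, ← pow_succ]

lemma exp_mulLeft (a : 𝒜) (x : 𝒜) :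
    exp (ContinuousLinearMap.mul ℂ 𝒜 a) x = exp a * x := by
  rw [exp_apply, exp_eq_tsum ℂ]
  rw [← (expSeries_summable' (𝕂 := ℂ) a).tsum_mul_right x]
  congr 1
  funext n
  rw [pow_mulLeft, smul_mul_assoc]

lemma exp_mulRight (a : 𝒜) (x : 𝒜) :
    exp ((ContinuousLinearMap.mul ℂ 𝒜).flip a) x = x * exp a := by
  rw [exp_apply, exp_eq_tsum ℂ]
  rw [← (expSeries_summable' (𝕂 := ℂ) a).tsum_mul_left x]
  congr 1
  funext n
  rw [pow_mulRight, mul_smul_comm]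

/-- If the spectrum of `a` lies in the open strip of half-width `π` and `x` commutes with
`exp ℂ a`, then `x` commutes with `a`. -/
lemma commute_of_exp_comm {a x : 𝒜}
    (ha : ∀ z ∈ spectrum ℂ a, |z.im| < Real.pi)
    (h : exp a * x = x * exp a) : Commute a x := by
  letI : NormedAlgebra ℚ 𝒜 := NormedAlgebra.restrictScalars ℚ ℂ 𝒜
  letI : NormedAlgebra ℚ (𝒜 →L[ℂ] 𝒜) := NormedAlgebra.restrictScalars ℚ ℂ (𝒜 →L[ℂ] 𝒜)
  set L : 𝒜 →L[ℂ] 𝒜 := ContinuousLinearMap.mul ℂ 𝒜 a with hL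
  set R : 𝒜 →L[ℂ] 𝒜 := (ContinuousLinearMap.mul ℂ 𝒜).flip a with hR
  have hLR : Commute L R := by
    ext y
    simp only [hL, hR, ContinuousLinearMap.mul_apply, ContinuousLinearMap.flip_apply,
      ContinuousLinearMap.mul_apply', mul_assoc]
  have hAA : exp a * exp (-a) = 1 := by
    rw [← exp_add_of_commute ((Commute.refl a).neg_right), add_neg_cancel, exp_zero]
  -- the fixed point equation
  have hfix : exp (L - R) x = x := by
    have hsum : exp (L - R) = exp L * exp (-R) := by
      rw [sub_eq_add_neg, exp_add_of_commute hLR.neg_right]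
    have hnegR : -R = (ContinuousLinearMap.mul ℂ 𝒜).flip (-a) := by
      rw [hR, map_neg]
    rw [hsum, ContinuousLinearMap.mul_apply, hnegR, exp_mulRight, hL, exp_mulLeft,
      ← mul_assoc, h, mul_assoc, hAA, mul_one]
  have hσL : ∀ z ∈ spectrum ℂ L, |z.im| < Real.pi := fun z hz => ha z (spectrum_mulLeft a hz)
  have hσR : ∀ z ∈ spectrum ℂ R, |z.im| < Real.pi := fun z hz => ha z (spectrum_mulRight a hz)
  have hexpLR := exp_eq_one_add_mul (L - R)
  have hcommg := commute_logAux (L - R)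
  obtain ⟨v, hv1, hv2⟩ := isUnit_iff_exists.mp (isUnit_logAux hLR hσL hσR)
  have hzero : (L - R) x = 0 := by
    have h2 : ((L - R) * logAux (L - R)) x = 0 := by
      have h3 := congrArg (fun T : 𝒜 →L[ℂ] 𝒜 => T x) hexpLR
      simp only [ContinuousLinearMap.add_apply, ContinuousLinearMap.one_apply, hfix] at h3
      exact (add_eq_left.mp h3.symm)
    calc (L - R) x = ((v * logAux (L - R)) * (L - R)) x := by rw [hv2, one_mul]
      _ = (v * ((L - R) * logAux (L - R))) x := by rw [mul_assoc, ← hcommg.eq]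
      _ = v (((L - R) * logAux (L - R)) x) := by rw [ContinuousLinearMap.mul_apply]
      _ = 0 := by rw [h2, map_zero]
  have h4 : a * x - x * a = 0 := by
    have h5 := hzero
    simp only [ContinuousLinearMap.sub_apply, hL, hR, ContinuousLinearMap.flip_apply,
      ContinuousLinearMap.mul_apply'] at h5
    exact h5
  exact sub_eq_zero.mp h4

/-- From `exp ℂ (a - b) = 1` with commuting `a b` whose spectra lie in the strip,
we get `a = b`. -/
lemma eq_of_exp_sub_eq_one {a b : 𝒜} (hab : Commute a b)
    (ha : ∀ z ∈ spectrum ℂ a, |z.im| < Real.pi)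
    (hb : ∀ z ∈ spectrum ℂ b, |z.im| < Real.pi)
    (h1 : exp (a - b) = 1) : a = b := by
  have hexp := exp_eq_one_add_mul (a - b)
  rw [h1] at hexp
  have h2 : (a - b) * logAux (a - b) = 0 := by
    have := hexp.symm
    rwa [add_eq_left] at this
  obtain ⟨v, hv1, hv2⟩ := isUnit_iff_exists.mp (isUnit_logAux hab ha hb)
  have : a - b = 0 := by
    calc a - b = (a - b) * (logAux (a - b) * v) := by rw [hv1, mul_one]
      _ = ((a - b) * logAux (a - b)) * v := by rw [mul_assoc]
      _ = 0 := by rw [h2, zero_mul]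
  exact sub_eq_zero.mp this

end PrincipalLogUnique

open PrincipalLogUnique in
/-- A bounded operator on a complex Banach space has at most one logarithm with spectrum
in the open strip `{z : ℂ | |Im z| < π}` (the principal logarithm). -/
theorem principal_operator_log_unique
    (E : Type*) [NormedAddCommGroup E] [NormedSpace ℂ E] [CompleteSpace E]
    (A B : E →L[ℂ] E)
    (hA : ∀ μ ∈ spectrum ℂ A, |μ.im| < Real.pi)
    (hB : ∀ μ ∈ spectrum ℂ B, |μ.im| < Real.pi)
    (hexp : exp A = exp B) :
    A = B := by
  letI : NormedAlgebra ℚ (E →L[ℂ] E) := NormedAlgebra.restrictScalars ℚ ℂ (E →L[ℂ] E)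
  have hAB : Commute A B := by
    refine commute_of_exp_comm hA ?_
    rw [hexp]
    exact ((Commute.refl B).exp_left).eq
  refine eq_of_exp_sub_eq_one hAB hA hB ?_
  rw [sub_eq_add_neg, exp_add_of_commute hAB.neg_right, hexp,
    ← exp_add_of_commute ((Commute.refl B).neg_right), add_neg_cancel, exp_zero]
end

section
/- Let n ≥ 1, let Tₛ > 0, and let L be an n×n complex matrix such that every eigenvalue λ in the spectrum of L satisfies |Im(λ)|·Tₛ < π. Let M = sup{|Im(λ)| : λ ∈ spectrum(L)}. Then for every n×n complex matrix L̃ satisfying |Im(μ)| ≤ M for all μ in the spectrum of L̃ and exp(Tₛ·L̃) = exp(Tₛ·L), one has L̃ = L. In other words, if the spectrum of the generator lies in the strip {z : |Im z| < π/Tₛ}, there is no generator alias within the aliasing space. -/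
open NormedSpace
open scoped Nat Matrix Pointwise
section Helpers

attribute [local instance] Matrix.linftyOpSemiNormedRing Matrix.linftyOpNormedRing Matrix.linftyOpNormedAlgebra

variable {n : ℕ}

lemma summable_aux (N : Matrix (Fin n) (Fin n) ℂ) (j : ℕ) :
    Summable (fun k : ℕ => ((Nat.factorial (k + j) : ℕ) : ℂ)⁻¹ • N ^ k) := by
  have h := Real.summable_pow_div_factorial ‖N‖
  refine Summable.of_norm_bounded_eventually_nat (g := fun k => ‖N‖ ^ k / Nat.factorial k) h ?_
  filter_upwards [Filter.eventually_ge_atTop 1] with k hk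
  rw [norm_smul]
  have h1 : ‖((Nat.factorial (k + j) : ℕ) : ℂ)⁻¹‖ ≤ ((Nat.factorial k : ℝ))⁻¹ := by
    rw [norm_inv, Complex.norm_natCast]
    exact inv_anti₀ (by positivity) (by exact_mod_cast Nat.factorial_le (Nat.le_add_right k j))
  have h2 : ‖N ^ k‖ ≤ ‖N‖ ^ k := norm_pow_le' N hk
  calc ‖((Nat.factorial (k + j) : ℕ) : ℂ)⁻¹‖ * ‖N ^ k‖ ≤ ((Nat.factorial k : ℝ))⁻¹ * ‖N‖ ^ k :=
        mul_le_mul h1 h2 (norm_nonneg _) (by positivity)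
    _ = ‖N‖ ^ k / Nat.factorial k := by ring

noncomputable def S0 (N : Matrix (Fin n) (Fin n) ℂ) : Matrix (Fin n) (Fin n) ℂ :=
  ∑' k : ℕ, ((Nat.factorial (k + 1) : ℕ) : ℂ)⁻¹ • N ^ k

noncomputable def R0 (N : Matrix (Fin n) (Fin n) ℂ) : Matrix (Fin n) (Fin n) ℂ :=
  ∑' k : ℕ, ((Nat.factorial (k + 2) : ℕ) : ℂ)⁻¹ • N ^ k

lemma commute_tsum_pow (N : Matrix (Fin n) (Fin n) ℂ) (c : ℕ → ℂ) :
    Commute N (∑' k : ℕ, c k • N ^ k) := by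
  unfold Commute SemiconjBy
  by_cases hc : Summable (fun k : ℕ => c k • N ^ k)
  · rw [← hc.tsum_mul_left, ← hc.tsum_mul_right]
    congr 1; funext k
    rw [mul_smul_comm, smul_mul_assoc, ← pow_succ, ← pow_succ']
  · rw [tsum_eq_zero_of_not_summable hc, mul_zero, zero_mul]

lemma commute_S0 (N : Matrix (Fin n) (Fin n) ℂ) : Commute N (S0 N) := commute_tsum_pow N _
lemma commute_R0 (N : Matrix (Fin n) (Fin n) ℂ) : Commute N (R0 N) := commute_tsum_pow N _

lemma exp_eq_one_add (N : Matrix (Fin n) (Fin n) ℂ) : exp N = 1 + N * S0 N := by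
  simp only [exp_eq_tsum ℂ]
  rw [Summable.tsum_eq_zero_add (by simpa using summable_aux N 0)]
  congr 1
  · simp
  · rw [S0, ← Summable.tsum_mul_left _ (by simpa using summable_aux N 1)]
    congr 1; funext k
    rw [pow_succ', mul_smul_comm]

lemma S0_eq_one_add (N : Matrix (Fin n) (Fin n) ℂ) : S0 N = 1 + N * R0 N := by
  rw [S0, Summable.tsum_eq_zero_add (by simpa using summable_aux N 1)]
  congr 1
  · simp
  · rw [R0, ← Summable.tsum_mul_left _ (by simpa using summable_aux N 2)]
    congr 1; funext k
    rw [pow_succ', mul_smul_comm]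

lemma exp_factored (A : Matrix (Fin n) (Fin n) ℂ) (l : ℂ) :
    exp A = Complex.exp l • exp (A - l • 1) := by
  have hA : A = l • (1 : Matrix (Fin n) (Fin n) ℂ) + (A - l • 1) := by abel
  have hc : Commute (l • (1 : Matrix (Fin n) (Fin n) ℂ)) (A - l • 1) :=
    (Commute.one_left _).smul_left l
  conv_lhs => rw [hA]
  rw [Matrix.exp_add_of_commute _ _ hc, ← Algebra.algebraMap_eq_smul_one]
  erw [← algebraMap_exp_comm]
  rw [← Complex.exp_eq_exp_ℂ, Algebra.algebraMap_eq_smul_one, smul_mul_assoc, one_mul]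

lemma exp_sub_smul (A : Matrix (Fin n) (Fin n) ℂ) (l : ℂ) :
    exp A - Complex.exp l • 1 =
      Complex.exp l • ((A - l • 1) * S0 (A - l • 1)) := by
  rw [exp_factored A l, exp_eq_one_add, smul_add, add_sub_cancel_left]

noncomputable def mvCLM (v : Fin n → ℂ) : Matrix (Fin n) (Fin n) ℂ →L[ℂ] (Fin n → ℂ) :=
  LinearMap.toContinuousLinearMap
    { toFun := fun M => M *ᵥ v
      map_add' := fun M1 M2 => Matrix.add_mulVec M1 M2 v
      map_smul' := fun c M => Matrix.smul_mulVec c M v }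

@[simp] lemma mvCLM_apply (v : Fin n → ℂ) (M : Matrix (Fin n) (Fin n) ℂ) :
    mvCLM v M = M *ᵥ v := rfl

lemma exp_mulVec_eq_sum (A : Matrix (Fin n) (Fin n) ℂ) (l : ℂ) (v : Fin n → ℂ) (m' : ℕ)
    (hv : (A - l • 1) ^ m' *ᵥ v = 0) :
    exp A *ᵥ v = Complex.exp l •
      ∑ k ∈ Finset.range m', ((Nat.factorial k : ℕ) : ℂ)⁻¹ • ((A - l • 1) ^ k *ᵥ v) := by
  rw [exp_factored A l, Matrix.smul_mulVec]
  congr 1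
  set N := A - l • 1 with hN
  have hs : Summable fun k : ℕ => ((Nat.factorial k : ℕ) : ℂ)⁻¹ • N ^ k := by
    simpa using summable_aux N 0
  have h3 := (mvCLM v).map_tsum hs
  simp only [map_smul, mvCLM_apply] at h3
  have h2 : exp N *ᵥ v = ∑' k : ℕ, ((Nat.factorial k : ℕ) : ℂ)⁻¹ • (N ^ k *ᵥ v) := by
    simp only [exp_eq_tsum ℂ]
    exact h3
  rw [h2]
  refine tsum_eq_sum ?_
  intro k hk
  have hk' : m' ≤ k := by simpa using Finset.mem_range.not.mp hk |> fun h => Nat.le_of_not_lt (by simpa using hk)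
  have hNk : N ^ k = N ^ (k - m') * N ^ m' := by rw [← pow_add]; congr 1; omega
  rw [hNk, ← Matrix.mulVec_mulVec, hv, Matrix.mulVec_zero, smul_zero]

lemma core1 (A : Matrix (Fin n) (Fin n) ℂ) (l : ℂ) (v : Fin n → ℂ) (i : ℕ)
    (hv : (A - l • 1) ^ i *ᵥ v = 0) :
    (exp A - Complex.exp l • 1) ^ i *ᵥ v = 0 := by
  set N := A - l • 1
  have hc : Commute N (S0 N) := commute_S0 N
  rw [exp_sub_smul, smul_pow, hc.mul_pow, (hc.pow_pow i i).eq, Matrix.smul_mulVec,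
    ← Matrix.mulVec_mulVec, hv, Matrix.mulVec_zero, smul_zero]

lemma S0_inj (N : Matrix (Fin n) (Fin n) ℂ) (m' : ℕ) (w : Fin n → ℂ)
    (hw : N ^ m' *ᵥ w = 0) (h0 : S0 N *ᵥ w = 0) : w = 0 := by
  have hR : Commute N (R0 N) := commute_R0 N
  have hw1 : w = -((N * R0 N) *ᵥ w) := by
    have h1 : S0 N *ᵥ w = w + (N * R0 N) *ᵥ w := by
      rw [S0_eq_one_add, Matrix.add_mulVec, Matrix.one_mulVec]
    rw [h1] at h0
    exact (neg_eq_of_add_eq_zero_left h0).symm ▸ (eq_neg_of_add_eq_zero_left h0)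
  have key : ∀ j : ℕ, w = (-1 : ℂ) ^ j • ((N * R0 N) ^ j *ᵥ w) := by
    intro j; induction j with
    | zero => simp
    | succ j ih =>
      calc w = (-1 : ℂ) ^ j • ((N * R0 N) ^ j *ᵥ w) := ih
        _ = (-1 : ℂ) ^ j • ((N * R0 N) ^ j *ᵥ (-((N * R0 N) *ᵥ w))) := by rw [← hw1]
        _ = (-1 : ℂ) ^ (j + 1) • ((N * R0 N) ^ (j + 1) *ᵥ w) := by
            simp [Matrix.mulVec_neg, Matrix.mulVec_mulVec, pow_succ, mul_neg_one, neg_smul,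
              smul_neg]
  have h2 := key m'
  have hcomm : (N * R0 N) ^ m' = R0 N ^ m' * N ^ m' := by
    rw [hR.mul_pow, (hR.pow_pow m' m').eq]
  rw [hcomm, ← Matrix.mulVec_mulVec, hw, Matrix.mulVec_zero, smul_zero] at h2
  exact h2

lemma core2 (A : Matrix (Fin n) (Fin n) ℂ) (l : ℂ) (v : Fin n → ℂ) (m' i : ℕ)
    (hv : (A - l • 1) ^ m' *ᵥ v = 0)
    (h2 : (exp A - Complex.exp l • 1) ^ i *ᵥ v = 0) :
    (A - l • 1) ^ i *ᵥ v = 0 := by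
  set N := A - l • 1
  have hc : Commute N (S0 N) := commute_S0 N
  have hfact : (exp A - Complex.exp l • 1) ^ i *ᵥ v
      = Complex.exp l ^ i • (S0 N ^ i *ᵥ (N ^ i *ᵥ v)) := by
    rw [exp_sub_smul, smul_pow, hc.mul_pow, (hc.pow_pow i i).eq, Matrix.smul_mulVec,
      ← Matrix.mulVec_mulVec]
  rw [hfact] at h2
  have h3 : S0 N ^ i *ᵥ (N ^ i *ᵥ v) = 0 :=
    (smul_eq_zero.mp h2).resolve_left (pow_ne_zero _ (Complex.exp_ne_zero l))
  have hw : N ^ m' *ᵥ (N ^ i *ᵥ v) = 0 := by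
    rw [Matrix.mulVec_mulVec, ← pow_add, add_comm, pow_add, ← Matrix.mulVec_mulVec, hv,
      Matrix.mulVec_zero]
  have main : ∀ (j : ℕ) (w : Fin n → ℂ), N ^ m' *ᵥ w = 0 → S0 N ^ j *ᵥ w = 0 → w = 0 := by
    intro j
    induction j with
    | zero => intro w _ h; simpa using h
    | succ j ih =>
      intro w hw h
      have hu : N ^ m' *ᵥ (S0 N *ᵥ w) = 0 := by
        rw [Matrix.mulVec_mulVec, (hc.pow_left m').eq, ← Matrix.mulVec_mulVec, hw,
          Matrix.mulVec_zero]
      have h' : S0 N ^ j *ᵥ (S0 N *ᵥ w) = 0 := by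
        rw [Matrix.mulVec_mulVec, ← pow_succ]
        exact h
      exact S0_inj N m' w hw (ih (S0 N *ᵥ w) hu h')
  exact main i (N ^ i *ᵥ v) hw h3

noncomputable def toEnd (M : Matrix (Fin n) (Fin n) ℂ) : Module.End ℂ (Fin n → ℂ) :=
  Matrix.toLinAlgEquiv' M

open Module in
lemma phi_pow_apply (M : Matrix (Fin n) (Fin n) ℂ) (l : ℂ) (k : ℕ) (v : Fin n → ℂ) :
    ((toEnd M - l • (1 : Module.End ℂ (Fin n → ℂ))) ^ k) v
      = (M - l • 1) ^ k *ᵥ v := by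
  have h : (toEnd M - l • (1 : Module.End ℂ (Fin n → ℂ))) ^ k
      = Matrix.toLinAlgEquiv' ((M - l • 1) ^ k) := by
    show ((Matrix.toLinAlgEquiv' M) - l • (1 : Module.End ℂ (Fin n → ℂ))) ^ k = _
    rw [map_pow, map_sub, map_smul, map_one]
  rw [h]
  rfl

open Module in
lemma mem_maxGen_iff (M : Matrix (Fin n) (Fin n) ℂ) (l : ℂ) (v : Fin n → ℂ) :
    v ∈ (toEnd M).maxGenEigenspace l ↔ (M - l • 1) ^ (n + 2) *ᵥ v = 0 := by
  constructor
  · intro hv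
    rw [Module.End.maxGenEigenspace_eq_genEigenspace_finrank,
      Module.End.mem_genEigenspace] at hv
    obtain ⟨k, hk, hv⟩ := hv
    rw [LinearMap.mem_ker, phi_pow_apply] at hv
    have hfr : finrank ℂ (Fin n → ℂ) = n := by simp
    rw [hfr] at hk
    have hkn : k ≤ n := by exact_mod_cast hk
    have hk' : k ≤ n + 2 := by omega
    have hsplit : (M - l • 1) ^ (n + 2) = (M - l • 1) ^ (n + 2 - k) * (M - l • 1) ^ k := by
      rw [← pow_add]; congr 1; omega
    rw [hsplit, ← Matrix.mulVec_mulVec, hv, Matrix.mulVec_zero]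
  · intro hv
    rw [Module.End.mem_maxGenEigenspace]
    exact ⟨n + 2, by rw [phi_pow_apply]; exact hv⟩

lemma spectrum_of_ne_bot {M : Matrix (Fin n) (Fin n) ℂ} {l : ℂ}
    (h : (toEnd M).maxGenEigenspace l ≠ ⊥) : l ∈ spectrum ℂ M := by
  have h1 : (toEnd M).HasUnifEigenvalue l ⊤ := h
  have h2 := (Module.End.hasUnifEigenvalue_iff_hasUnifEigenvalue_one (k := ⊤) (by norm_num)).mp h1
  have h3 := Module.End.hasUnifEigenvalue_iff_mem_spectrum.mp h2
  rwa [show spectrum ℂ (toEnd M) = spectrum ℂ M from AlgEquiv.spectrum_eq Matrix.toLinAlgEquiv' M] at h3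

lemma strip_exp_inj {l1 l2 : ℂ} (h1 : |l1.im| < Real.pi) (h2 : |l2.im| < Real.pi)
    (h : Complex.exp l1 = Complex.exp l2) : l1 = l2 := by
  obtain ⟨k, hk⟩ := Complex.exp_eq_exp_iff_exists_int.mp h
  have him := congrArg Complex.im hk
  simp [Complex.add_im, Complex.mul_im, Complex.mul_re] at him
  have hk0 : k = 0 := by
    by_contra hne
    have h1k : (1 : ℝ) ≤ |(k : ℝ)| := by
      rw [← Int.cast_abs]
      exact_mod_cast Int.one_le_abs (by omega)
    have : |(k : ℝ) * (2 * Real.pi)| < 2 * Real.pi := by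
      have : (k : ℝ) * (2 * Real.pi) = l1.im - l2.im := by rw [him]; ring
      rw [this]
      calc |l1.im - l2.im| ≤ |l1.im| + |l2.im| := abs_sub _ _
        _ < 2 * Real.pi := by linarith
    rw [abs_mul] at this
    have hpi : |2 * Real.pi| = 2 * Real.pi := abs_of_pos (by positivity)
    rw [hpi] at this
    nlinarith [Real.pi_pos]
  rw [hk0] at hk
  simpa using hk

lemma final_step (A B : Matrix (Fin n) (Fin n) ℂ) (l : ℂ)
    (hexp : exp A = exp B)
    (hAB : ∀ w : Fin n → ℂ, (A - l • 1) ^ (n + 2) *ᵥ w = 0 → (B - l • 1) ^ (n + 2) *ᵥ w = 0)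
    (hBA : ∀ w : Fin n → ℂ, (B - l • 1) ^ (n + 2) *ᵥ w = 0 → (A - l • 1) ^ (n + 2) *ᵥ w = 0)
    (v : Fin n → ℂ) (hv : (A - l • 1) ^ (n + 2) *ᵥ v = 0) : A *ᵥ v = B *ᵥ v := by
  set m' : ℕ := n + 2 with hm'
  set NA := A - l • (1 : Matrix (Fin n) (Fin n) ℂ) with hNA
  set NB := B - l • (1 : Matrix (Fin n) (Fin n) ℂ) with hNB
  set E := exp A with hE
  set μ := Complex.exp l with hμ
  set U : ℕ → Submodule ℂ (Fin n → ℂ) := fun i =>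
    LinearMap.ker (Matrix.toLin' (NA ^ m')) ⊓ LinearMap.ker (Matrix.toLin' ((E - μ • 1) ^ i))
    with hU
  have hUmem : ∀ (i : ℕ) (w : Fin n → ℂ),
      w ∈ U i ↔ (NA ^ m' *ᵥ w = 0 ∧ (E - μ • 1) ^ i *ᵥ w = 0) := by
    intro i w
    simp only [hU, Submodule.mem_inf, LinearMap.mem_ker, Matrix.toLin'_apply]
  have hU0 : ∀ w ∈ U 0, w = 0 := by
    intro w hw
    have := ((hUmem 0 w).mp hw).2
    simpa [Matrix.one_mulVec] using this
  have hUmono : Monotone U := by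
    refine monotone_nat_of_le_succ fun i w hw => ?_
    rw [hUmem] at hw ⊢
    refine ⟨hw.1, ?_⟩
    rw [pow_succ', ← Matrix.mulVec_mulVec, hw.2, Matrix.mulVec_zero]
  -- single-step descent for NA
  have hNAstep : ∀ (i : ℕ) (w : Fin n → ℂ), w ∈ U i → NA *ᵥ w ∈ U (i - 1) := by
    intro i w hw
    match i with
    | 0 =>
      rw [hU0 w hw]
      simpa using Submodule.zero_mem _
    | (i + 1) =>
      rw [hUmem] at hw ⊢
      obtain ⟨hw1, hw2⟩ := hw
      have h1 : NA ^ m' *ᵥ (NA *ᵥ w) = 0 := by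
        rw [Matrix.mulVec_mulVec, ← pow_succ, pow_succ', ← Matrix.mulVec_mulVec, hw1,
          Matrix.mulVec_zero]
      have h2 : NA ^ (i + 1) *ᵥ w = 0 := core2 A l w m' (i + 1) hw1 hw2
      have h3 : NA ^ i *ᵥ (NA *ᵥ w) = 0 := by
        rw [Matrix.mulVec_mulVec, ← pow_succ]
        exact h2
      exact ⟨h1, by simpa using core1 A l (NA *ᵥ w) i h3⟩
  -- single-step descent for NB
  have hNBstep : ∀ (i : ℕ) (w : Fin n → ℂ), w ∈ U i → NB *ᵥ w ∈ U (i - 1) := by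
    intro i w hw
    match i with
    | 0 =>
      rw [hU0 w hw]
      simpa using Submodule.zero_mem _
    | (i + 1) =>
      rw [hUmem] at hw ⊢
      obtain ⟨hw1, hw2⟩ := hw
      have hwB : NB ^ m' *ᵥ w = 0 := hAB w hw1
      have h1 : NA ^ m' *ᵥ (NB *ᵥ w) = 0 := by
        refine hBA _ ?_
        rw [Matrix.mulVec_mulVec, ← pow_succ, pow_succ', ← Matrix.mulVec_mulVec, hwB,
          Matrix.mulVec_zero]
      have hw2' : (exp B - μ • 1) ^ (i + 1) *ᵥ w = 0 := by rw [← hexp]; exact hw2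
      have h2 : NB ^ (i + 1) *ᵥ w = 0 := core2 B l w m' (i + 1) hwB hw2'
      have h3 : NB ^ i *ᵥ (NB *ᵥ w) = 0 := by
        rw [Matrix.mulVec_mulVec, ← pow_succ]
        exact h2
      have h4 := core1 B l (NB *ᵥ w) i h3
      rw [← hexp] at h4
      exact ⟨h1, by simpa using h4⟩
  -- power descent for NA
  have hpowA : ∀ (a i : ℕ) (w : Fin n → ℂ), w ∈ U i → NA ^ a *ᵥ w ∈ U (i - a) := by
    intro a
    induction a with
    | zero => intro i w hw; simpa [Matrix.one_mulVec] using hw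
    | succ a ih =>
      intro i w hw
      have h1 : NA ^ (a + 1) *ᵥ w = NA ^ a *ᵥ (NA *ᵥ w) := by
        rw [Matrix.mulVec_mulVec, pow_succ]
      rw [h1]
      have h2 := ih (i - 1) (NA *ᵥ w) (hNAstep i w hw)
      have h3 : i - 1 - a = i - (a + 1) := by omega
      rwa [h3] at h2
  -- the sum identity
  have hid : ∀ w : Fin n → ℂ, NA ^ m' *ᵥ w = 0 →
      NA *ᵥ w - NB *ᵥ w = ∑ k ∈ Finset.Ico 2 m',
        ((Nat.factorial k : ℕ) : ℂ)⁻¹ • (NB ^ k *ᵥ w - NA ^ k *ᵥ w) := by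
    intro w hw
    have hwB : NB ^ m' *ᵥ w = 0 := hAB w hw
    have hsumA := exp_mulVec_eq_sum A l w m' hw
    have hsumB := exp_mulVec_eq_sum B l w m' hwB
    have hABexp : exp A = exp B := by rw [← hE]; exact hexp
    rw [hABexp, hsumB] at hsumA
    have hsum : ∑ k ∈ Finset.range m', ((Nat.factorial k : ℕ) : ℂ)⁻¹ • (NB ^ k *ᵥ w)
        = ∑ k ∈ Finset.range m', ((Nat.factorial k : ℕ) : ℂ)⁻¹ • (NA ^ k *ᵥ w) :=
      smul_right_injective (Fin n → ℂ) (Complex.exp_ne_zero l) hsumA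
    have hsplit : ∀ C : Matrix (Fin n) (Fin n) ℂ,
        ∑ k ∈ Finset.range m', ((Nat.factorial k : ℕ) : ℂ)⁻¹ • (C ^ k *ᵥ w)
          = w + C *ᵥ w + ∑ k ∈ Finset.Ico 2 m', ((Nat.factorial k : ℕ) : ℂ)⁻¹ • (C ^ k *ᵥ w) := by
      intro C
      rw [Finset.range_eq_Ico,
        ← Finset.sum_Ico_consecutive _ (by omega : 0 ≤ 2) (by omega : 2 ≤ m')]
      congr 1
      rw [← Finset.range_eq_Ico]
      simp [Finset.sum_range_succ, Matrix.one_mulVec]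
    have h9 : w + NB *ᵥ w + ∑ k ∈ Finset.Ico 2 m', ((Nat.factorial k : ℕ) : ℂ)⁻¹ • (NB ^ k *ᵥ w)
        = w + NA *ᵥ w + ∑ k ∈ Finset.Ico 2 m', ((Nat.factorial k : ℕ) : ℂ)⁻¹ • (NA ^ k *ᵥ w) := by
      rw [← hsplit, ← hsplit]; exact hsum
    have h9' : NB *ᵥ w + ∑ k ∈ Finset.Ico 2 m', ((Nat.factorial k : ℕ) : ℂ)⁻¹ • (NB ^ k *ᵥ w)
        = NA *ᵥ w + ∑ k ∈ Finset.Ico 2 m', ((Nat.factorial k : ℕ) : ℂ)⁻¹ • (NA ^ k *ᵥ w) := by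
      have := h9
      rwa [add_assoc, add_assoc, add_right_inj] at this
    have h10 : NA *ᵥ w - NB *ᵥ w
        = (∑ k ∈ Finset.Ico 2 m', ((Nat.factorial k : ℕ) : ℂ)⁻¹ • (NB ^ k *ᵥ w))
          - ∑ k ∈ Finset.Ico 2 m', ((Nat.factorial k : ℕ) : ℂ)⁻¹ • (NA ^ k *ᵥ w) := by
      rw [sub_eq_sub_iff_add_eq_add, ← h9']
      exact add_comm _ _
    rw [h10, ← Finset.sum_sub_distrib]
    congr 1
    funext k
    rw [smul_sub]
  -- main descent induction
  have G : ∀ (j s : ℕ) (w : Fin n → ℂ), w ∈ U s → NA *ᵥ w - NB *ᵥ w ∈ U (s - 1 - j) := by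
    intro j
    induction j with
    | zero =>
      intro s w hw
      simpa using Submodule.sub_mem _ (hNAstep s w hw) (hNBstep s w hw)
    | succ j ih =>
      intro s w hw
      have H : ∀ k : ℕ, NB ^ (k + 1) *ᵥ w - NA ^ (k + 1) *ᵥ w ∈ U (s - (k + 1) - j) := by
        intro k
        induction k with
        | zero =>
          have := Submodule.neg_mem _ (ih s w hw)
          simpa [neg_sub] using this
        | succ k ihk =>
          have hsplit2 : NB ^ (k + 2) *ᵥ w - NA ^ (k + 2) *ᵥ w
              = NB *ᵥ (NB ^ (k + 1) *ᵥ w - NA ^ (k + 1) *ᵥ w)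
                + -(NA *ᵥ (NA ^ (k + 1) *ᵥ w) - NB *ᵥ (NA ^ (k + 1) *ᵥ w)) := by
            rw [Matrix.mulVec_sub]
            simp only [Matrix.mulVec_mulVec, ← pow_succ']
            abel
          rw [hsplit2]
          refine Submodule.add_mem _ ?_ (Submodule.neg_mem _ ?_)
          · have h1 := hNBstep _ _ ihk
            have he : s - (k + 1) - j - 1 = s - (k + 2) - j := by omega
            rwa [he] at h1
          · have h2 := hpowA (k + 1) s w hw
            have h3 := ih _ _ h2
            have he : s - (k + 1) - 1 - j = s - (k + 2) - j := by omega
            rwa [he] at h3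
      have hwm : NA ^ m' *ᵥ w = 0 := ((hUmem s w).mp hw).1
      rw [hid w hwm]
      refine Submodule.sum_mem _ ?_
      intro k hk
      rw [Finset.mem_Ico] at hk
      obtain ⟨k', rfl⟩ : ∃ k', k = k' + 1 := ⟨k - 1, by omega⟩
      refine Submodule.smul_mem _ _ (hUmono (by omega : s - (k' + 1) - j ≤ s - 1 - (j + 1)) (H k'))
  -- conclusion
  have hvU : v ∈ U m' := (hUmem m' v).mpr ⟨hv, by simpa using core1 A l v m' hv⟩
  have hfin := G m' m' v hvU
  have h0 : NA *ᵥ v - NB *ᵥ v = 0 := by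
    refine hU0 _ ?_
    have he : m' - 1 - m' = 0 := by omega
    rwa [he] at hfin
  have e1 : NA *ᵥ v = A *ᵥ v - l • v := by
    rw [hNA, Matrix.sub_mulVec, Matrix.smul_mulVec, Matrix.one_mulVec]
  have e2 : NB *ᵥ v = B *ᵥ v - l • v := by
    rw [hNB, Matrix.sub_mulVec, Matrix.smul_mulVec, Matrix.one_mulVec]
  rw [e1, e2, sub_sub_sub_cancel_right] at h0
  exact sub_eq_zero.mp h0

theorem exp_injective_strip (A B : Matrix (Fin n) (Fin n) ℂ)
    (hA : ∀ μ ∈ spectrum ℂ A, |μ.im| < Real.pi)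
    (hB : ∀ μ ∈ spectrum ℂ B, |μ.im| < Real.pi)
    (hexp : exp A = exp B) : A = B := by
  have hC1 : ∀ (M : Matrix (Fin n) (Fin n) ℂ) (l : ℂ),
      (toEnd M).maxGenEigenspace l ≤ (toEnd (exp M)).maxGenEigenspace (Complex.exp l) := by
    intro M l v hv
    rw [mem_maxGen_iff] at hv ⊢
    exact core1 M l v (n + 2) hv
  have hC2 : ∀ (M : Matrix (Fin n) (Fin n) ℂ),
      (∀ μ ∈ spectrum ℂ M, |μ.im| < Real.pi) → ∀ l : ℂ, |l.im| < Real.pi →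
      (toEnd (exp M)).maxGenEigenspace (Complex.exp l) ≤ (toEnd M).maxGenEigenspace l := by
    intro M hstrip l hl v hv
    have htop := Module.End.iSup_maxGenEigenspace_eq_top (toEnd M)
    have hQ : (⊤ : Submodule ℂ (Fin n → ℂ)) ≤ (toEnd M).maxGenEigenspace l
        ⊔ (⨆ l', ⨆ _ : l' ≠ l, (toEnd M).maxGenEigenspace l') := by
      rw [← htop]
      refine iSup_le fun l' => ?_
      by_cases h : l' = l
      · subst h; exact le_sup_left
      · exact le_sup_of_le_right
          (le_iSup₂ (f := fun l' (_ : l' ≠ l) => (toEnd M).maxGenEigenspace l') l' h)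
    obtain ⟨a, ha, b, hb, hab⟩ := Submodule.mem_sup.mp (hQ (show v ∈ (⊤ : Submodule ℂ (Fin n → ℂ)) from Submodule.mem_top))
    have hav : a ∈ (toEnd (exp M)).maxGenEigenspace (Complex.exp l) := hC1 M l ha
    have hbr : b ∈ (toEnd (exp M)).maxGenEigenspace (Complex.exp l) := by
      have hbv : b = v - a := by rw [← hab]; abel
      rw [hbv]; exact Submodule.sub_mem _ hv hav
    have hbQ : b ∈ ⨆ μ', ⨆ _ : μ' ≠ Complex.exp l, (toEnd (exp M)).maxGenEigenspace μ' := by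
      have hSle : (⨆ l', ⨆ _ : l' ≠ l, (toEnd M).maxGenEigenspace l')
          ≤ ⨆ μ', ⨆ _ : μ' ≠ Complex.exp l, (toEnd (exp M)).maxGenEigenspace μ' := by
        refine iSup₂_le fun l' hl' => ?_
        by_cases hbot : (toEnd M).maxGenEigenspace l' = ⊥
        · rw [hbot]; exact bot_le
        · have hspec := spectrum_of_ne_bot hbot
          have hl's := hstrip l' hspec
          have hne : Complex.exp l' ≠ Complex.exp l := fun hc => hl' (strip_exp_inj hl's hl hc)
          exact (hC1 M l').trans (le_iSup₂
            (f := fun μ' (_ : μ' ≠ Complex.exp l) => (toEnd (exp M)).maxGenEigenspace μ') _ hne)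
      exact hSle hb
    have hdisj := Module.End.independent_maxGenEigenspace (toEnd (exp M))
    have hb0 : b = 0 := (Submodule.disjoint_def.mp (hdisj (Complex.exp l))) b hbr hbQ
    rw [← hab, hb0, add_zero]
    exact ha
  have hpq : ∀ l : ℂ, |l.im| < Real.pi →
      ∀ w : Fin n → ℂ, (A - l • 1) ^ (n + 2) *ᵥ w = 0 → (B - l • 1) ^ (n + 2) *ᵥ w = 0 := by
    intro l hl w hw
    have h1 : w ∈ (toEnd A).maxGenEigenspace l := (mem_maxGen_iff A l w).mpr hw
    have h2 := hC1 A l h1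
    rw [hexp] at h2
    exact (mem_maxGen_iff B l w).mp (hC2 B hB l hl h2)
  have hqp : ∀ l : ℂ, |l.im| < Real.pi →
      ∀ w : Fin n → ℂ, (B - l • 1) ^ (n + 2) *ᵥ w = 0 → (A - l • 1) ^ (n + 2) *ᵥ w = 0 := by
    intro l hl w hw
    have h1 : w ∈ (toEnd B).maxGenEigenspace l := (mem_maxGen_iff B l w).mpr hw
    have h2 := hC1 B l h1
    rw [← hexp] at h2
    exact (mem_maxGen_iff A l w).mp (hC2 A hA l hl h2)
  have hmain : ∀ v : Fin n → ℂ, A *ᵥ v = B *ᵥ v := by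
    intro v
    have htop := Module.End.iSup_maxGenEigenspace_eq_top (toEnd A)
    set K : Submodule ℂ (Fin n → ℂ) := LinearMap.ker (Matrix.toLin' A - Matrix.toLin' B) with hK
    have hKmem : ∀ w, w ∈ K ↔ A *ᵥ w = B *ᵥ w := by
      intro w
      simp [hK, LinearMap.mem_ker, LinearMap.sub_apply, Matrix.toLin'_apply, sub_eq_zero]
    have hle : ∀ l : ℂ, (toEnd A).maxGenEigenspace l ≤ K := by
      intro l
      by_cases hbot : (toEnd A).maxGenEigenspace l = ⊥
      · rw [hbot]; exact bot_le
      · have hl := hA l (spectrum_of_ne_bot hbot)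
        intro w hw
        rw [hKmem]
        exact final_step A B l hexp (hpq l hl) (hqp l hl) w ((mem_maxGen_iff A l w).mp hw)
    have hKtop : (⊤ : Submodule ℂ (Fin n → ℂ)) ≤ K := by rw [← htop]; exact iSup_le hle
    exact (hKmem v).mp (hKtop Submodule.mem_top)
  have hlin : Matrix.toLin' A = Matrix.toLin' B :=
    LinearMap.ext fun v => by rw [Matrix.toLin'_apply, Matrix.toLin'_apply, hmain v]
  exact Matrix.toLin'.injective hlin

end Helpers

/-- If the spectrum of the generator `L` lies in the strip `{z : ℂ | |Im z| < π / Tₛ}`,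
there is no generator alias within the aliasing space: any matrix `L̃` whose spectrum has
imaginary parts bounded by `M = sup {|Im λ| : λ ∈ spectrum L}` and with
`exp (Tₛ • L̃) = exp (Tₛ • L)` must equal `L`. -/
theorem no_generator_alias_of_spectrum_in_strip
    (n : ℕ) (hn : 1 ≤ n) (Ts : ℝ) (hTs : 0 < Ts)
    (L : Matrix (Fin n) (Fin n) ℂ)
    (hL : ∀ μ ∈ spectrum ℂ L, |μ.im| * Ts < Real.pi)
    (M : ℝ) (hM : M = sSup ((fun μ : ℂ => |μ.im|) '' spectrum ℂ L)) :
    ∀ L' : Matrix (Fin n) (Fin n) ℂ,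
      (∀ μ ∈ spectrum ℂ L', |μ.im| ≤ M) →
      exp ((Ts : ℂ) • L') = exp ((Ts : ℂ) • L) →
      L' = L := by
  intro L' hL' hexp
  have hTs0 : (Ts : ℂ) ≠ 0 := Complex.ofReal_ne_zero.mpr hTs.ne'
  have hspecL : (spectrum ℂ L).Nonempty := by
    haveI : Nonempty (Fin n) := Fin.pos_iff_nonempty.mp hn
    haveI : Nontrivial (Fin n → ℂ) := Function.nontrivial
    have h1 := spectrum.nonempty_of_isAlgClosed_of_finiteDimensional ℂ (toEnd L)
    rwa [show spectrum ℂ (toEnd L) = spectrum ℂ L from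
      AlgEquiv.spectrum_eq Matrix.toLinAlgEquiv' L] at h1
  have hMmem : M ∈ (fun μ : ℂ => |μ.im|) '' spectrum ℂ L := by
    rw [hM]
    exact Set.Nonempty.csSup_mem (hspecL.image _) ((Matrix.finite_spectrum L).image _)
  have hMTs : M * Ts < Real.pi := by
    obtain ⟨l0, hl0, hMe⟩ := hMmem
    rw [← hMe]
    exact hL l0 hl0
  have hsmul : ∀ C : Matrix (Fin n) (Fin n) ℂ,
      spectrum ℂ ((Ts : ℂ) • C) = (Ts : ℂ) • spectrum ℂ C := by
    intro C
    have h1 := spectrum.unit_smul_eq_smul C (Units.mk0 (Ts : ℂ) hTs0)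
    simpa [Units.smul_def] using h1
  have hstripA : ∀ μ ∈ spectrum ℂ ((Ts : ℂ) • L), |μ.im| < Real.pi := by
    intro μ hμ
    rw [hsmul L] at hμ
    obtain ⟨lam, hlam, rfl⟩ := hμ
    have him : ((Ts : ℂ) • lam).im = Ts * lam.im := by
      simp [smul_eq_mul, Complex.mul_im]
    rw [him, abs_mul, abs_of_pos hTs]
    calc Ts * |lam.im| = |lam.im| * Ts := mul_comm _ _
      _ < Real.pi := hL lam hlam
  have hstripB : ∀ μ ∈ spectrum ℂ ((Ts : ℂ) • L'), |μ.im| < Real.pi := by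
    intro μ hμ
    rw [hsmul L'] at hμ
    obtain ⟨lam, hlam, rfl⟩ := hμ
    have him : ((Ts : ℂ) • lam).im = Ts * lam.im := by
      simp [smul_eq_mul, Complex.mul_im]
    rw [him, abs_mul, abs_of_pos hTs]
    calc Ts * |lam.im| ≤ Ts * M := by
          have := hL' lam hlam
          nlinarith
      _ = M * Ts := mul_comm _ _
      _ < Real.pi := hMTs
  have hAB : (Ts : ℂ) • L' = (Ts : ℂ) • L :=
    exp_injective_strip ((Ts : ℂ) • L') ((Ts : ℂ) • L) hstripB hstripA hexp
  exact smul_right_injective (Matrix (Fin n) (Fin n) ℂ) hTs0 hAB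
end

section
/- Let n ≥ 1, let Tₛ > 0, and let L be an n×n complex matrix such that some eigenvalue λ in the spectrum of L satisfies |Im(λ)| ≥ π/Tₛ. Let M = sup{|Im(λ)| : λ ∈ spectrum(L)}. Then there exists an n×n complex matrix L̃ with L̃ ≠ L, exp(Tₛ·L̃) = exp(Tₛ·L), and |Im(μ)| ≤ M for every μ in the spectrum of L̃. In other words, if the spectrum of the generator does not lie in the open strip {z : |Im z| < π/Tₛ}, a generator alias exists within the aliasing space. -/
open NormedSpace

open scoped Nat

open Matrix Polynomial in
private lemma aux_aeval_mulVec {n : ℕ} (A : Matrix (Fin n) (Fin n) ℂ) {v : Fin n → ℂ} {μ : ℂ}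
    (hv : A *ᵥ v = μ • v) (f : Polynomial ℂ) :
    (Polynomial.aeval A f) *ᵥ v = f.eval μ • v := by
  induction f using Polynomial.induction_on' with
  | add p q hp hq => rw [map_add, Matrix.add_mulVec, hp, hq, eval_add, add_smul]
  | monomial m c =>
    have hpow : ∀ m : ℕ, A ^ m *ᵥ v = μ ^ m • v := by
      intro m
      induction m with
      | zero => simp
      | succ k ih =>
        rw [pow_succ, ← Matrix.mulVec_mulVec, hv, Matrix.mulVec_smul, ih, pow_succ,
          smul_smul, mul_comm]
    rw [aeval_monomial, ← Algebra.smul_def, Matrix.smul_mulVec, hpow, eval_monomial,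
      smul_smul]

open Matrix in
private lemma aux_mem_spectrum_iff {n : ℕ} (A : Matrix (Fin n) (Fin n) ℂ) (μ : ℂ) :
    μ ∈ spectrum ℂ A ↔ ∃ v ≠ 0, A *ᵥ v = μ • v := by
  rw [spectrum.mem_iff, Matrix.isUnit_iff_isUnit_det, isUnit_iff_ne_zero, not_not,
    ← Matrix.exists_mulVec_eq_zero_iff]
  apply exists_congr; intro v
  apply and_congr_right; intro hv
  have key : (algebraMap ℂ (Matrix (Fin n) (Fin n) ℂ) μ - A) *ᵥ v = μ • v - A *ᵥ v := by
    rw [Matrix.sub_mulVec, Algebra.algebraMap_eq_smul_one, Matrix.smul_mulVec,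
      Matrix.one_mulVec]
  rw [key, sub_eq_zero, eq_comm]

set_option maxHeartbeats 1000000 in
private lemma aux_exp_idem {𝔸 : Type*} [NormedRing 𝔸] [NormedAlgebra ℂ 𝔸] [CompleteSpace 𝔸]
    (P : 𝔸) (hP : P * P = P) (c : ℂ) (hc : Complex.exp c = 1) : exp (c • P) = 1 := by
  have hPn : ∀ k : ℕ, P ^ (k + 1) = P := by
    intro k
    induction k with
    | zero => rw [pow_one]
    | succ m ih => rw [pow_succ, ih, hP]
  have hsum : Summable fun k : ℕ => (k !⁻¹ : ℂ) • (c • P) ^ k := expSeries_summable' (c • P)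
  have hsc : Summable fun k : ℕ => (k !⁻¹ : ℂ) • c ^ k := expSeries_summable' c
  have hsc' : Summable fun k : ℕ => ((k + 1)!⁻¹ : ℂ) • c ^ (k + 1) :=
    (summable_nat_add_iff 1).mpr hsc
  have hexp : (∑' k : ℕ, ((k + 1)!⁻¹ : ℂ) • c ^ (k + 1)) = Complex.exp c - 1 := by
    have h0 := Summable.tsum_eq_zero_add hsc
    have h1 : Complex.exp c = ∑' k : ℕ, (k !⁻¹ : ℂ) • c ^ k := by
      rw [Complex.exp_eq_exp_ℂ, exp_eq_tsum (𝕂 := ℂ)]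
    rw [h1, h0]
    simp
  calc exp (c • P) = ∑' k : ℕ, (k !⁻¹ : ℂ) • (c • P) ^ k := by rw [exp_eq_tsum (𝕂 := ℂ)]
    _ = (0!⁻¹ : ℂ) • (c • P) ^ 0 + ∑' k : ℕ, ((k + 1)!⁻¹ : ℂ) • (c • P) ^ (k + 1) :=
        Summable.tsum_eq_zero_add hsum
    _ = 1 + ∑' k : ℕ, (((k + 1)!⁻¹ : ℂ) • c ^ (k + 1)) • P := by
        congr 1
        · simp
        · refine tsum_congr fun k => ?_
          rw [smul_pow, hPn, smul_smul, smul_eq_mul]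
    _ = 1 + (∑' k : ℕ, ((k + 1)!⁻¹ : ℂ) • c ^ (k + 1)) • P := by rw [Summable.tsum_smul_const hsc']
    _ = 1 := by rw [hexp, hc]; simp

private lemma aux_matrix_exp_idem {n : ℕ} (P : Matrix (Fin n) (Fin n) ℂ) (hP : P * P = P)
    (c : ℂ) (hc : Complex.exp c = 1) : exp (c • P) = 1 := by
  letI : SeminormedRing (Matrix (Fin n) (Fin n) ℂ) := Matrix.linftyOpSemiNormedRing
  letI : NormedRing (Matrix (Fin n) (Fin n) ℂ) := Matrix.linftyOpNormedRing
  letI : NormedAlgebra ℂ (Matrix (Fin n) (Fin n) ℂ) := Matrix.linftyOpNormedAlgebra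
  exact aux_exp_idem P hP c hc

open Matrix Polynomial in
/-- If some eigenvalue of the generator `L` has `|Im λ| ≥ π / Tₛ`, then a generator alias
exists within the aliasing space: some `L̃ ≠ L` with spectrum of imaginary parts bounded by
`M = sup {|Im λ| : λ ∈ spectrum L}` satisfies `exp (Tₛ • L̃) = exp (Tₛ • L)`. -/
theorem exists_generator_alias_of_spectrum_outside_strip
    (n : ℕ) (hn : 1 ≤ n) (Ts : ℝ) (hTs : 0 < Ts)
    (L : Matrix (Fin n) (Fin n) ℂ)
    (hL : ∃ μ ∈ spectrum ℂ L, Real.pi / Ts ≤ |μ.im|)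
    (M : ℝ) (hM : M = sSup ((fun μ : ℂ => |μ.im|) '' spectrum ℂ L)) :
    ∃ L' : Matrix (Fin n) (Fin n) ℂ,
      L' ≠ L ∧
      exp ((Ts : ℂ) • L') = exp ((Ts : ℂ) • L) ∧
      ∀ μ ∈ spectrum ℂ L', |μ.im| ≤ M := by
  obtain ⟨μ₀, hμ₀S, hμ₀im⟩ := hL
  have hπ : 0 < Real.pi := Real.pi_pos
  have hπTs : 0 < Real.pi / Ts := div_pos hπ hTs
  have hbound : ∀ ν ∈ spectrum ℂ L, |ν.im| ≤ M := by
    intro ν hν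
    rw [hM]
    exact le_csSup ((L.finite_spectrum.image _).bddAbove) (Set.mem_image_of_mem _ hν)
  have hMπ : Real.pi / Ts ≤ M := le_trans hμ₀im (hbound μ₀ hμ₀S)
  obtain ⟨v₀, hv₀, hv₀eig⟩ := (aux_mem_spectrum_iff L μ₀).mp hμ₀S
  have hχ0 : L.charpoly ≠ 0 := L.charpoly_monic.ne_zero
  have hCH : Polynomial.aeval L L.charpoly = 0 := Matrix.aeval_self_charpoly L
  have hroot : L.charpoly.eval μ₀ = 0 := by
    have h := aux_aeval_mulVec L hv₀eig L.charpoly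
    rw [hCH, Matrix.zero_mulVec] at h
    rcases smul_eq_zero.mp h.symm with h' | h'
    · exact h'
    · exact absurd h' hv₀
  set k : ℕ := Polynomial.rootMultiplicity μ₀ L.charpoly with hkdef
  set p : Polynomial ℂ := (Polynomial.X - Polynomial.C μ₀) ^ k with hpdef
  set q : Polynomial ℂ := L.charpoly /ₘ p with hqdef
  have hpq : p * q = L.charpoly :=
    Polynomial.pow_mul_divByMonic_rootMultiplicity_eq L.charpoly μ₀
  have hq0 : q.eval μ₀ ≠ 0 :=
    Polynomial.eval_divByMonic_pow_rootMultiplicity_ne_zero μ₀ hχ0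
  have hkpos : 0 < k := (Polynomial.rootMultiplicity_pos hχ0).mpr hroot
  have hcop : IsCoprime p q :=
    (((Polynomial.prime_X_sub_C μ₀).coprime_iff_not_dvd).mpr
      (fun hdvd => hq0 ((Polynomial.dvd_iff_isRoot).mp hdvd))).pow_left
  obtain ⟨a, b, hab⟩ := hcop
  set P : Matrix (Fin n) (Fin n) ℂ := Polynomial.aeval L (b * q) with hPdef
  have haevalmul : ∀ f g : Polynomial ℂ,
      Polynomial.aeval L f * Polynomial.aeval L g = Polynomial.aeval L (f * g) :=
    fun f g => (map_mul _ f g).symm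
  have hcomm : L * P = P * L := by
    have h1 := haevalmul Polynomial.X (b * q)
    have h2 := haevalmul (b * q) Polynomial.X
    rw [Polynomial.aeval_X] at h1 h2
    rw [hPdef, h1, h2, mul_comm Polynomial.X (b * q)]
  have hP2 : P * P = P := by
    have hpoly : (b * q) * (b * q) = b * q - (a * b) * (p * q) := by
      linear_combination (b * q) * hab
    have hz : Polynomial.aeval L (a * b * L.charpoly) = 0 := by
      rw [_root_.map_mul, hCH, mul_zero]
    rw [hPdef, haevalmul, hpoly, hpq, _root_.map_sub, hz, sub_zero]
  have hkill : Polynomial.aeval L p * P = 0 := by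
    have hbp : p * (b * q) = b * (p * q) := by ring
    rw [hPdef, haevalmul, hbp, hpq, _root_.map_mul, hCH, mul_zero]
  have hpeval : p.eval μ₀ = 0 := by
    rw [hpdef]
    simp [zero_pow hkpos.ne']
  have hPv₀ : P *ᵥ v₀ = v₀ := by
    have heval : (b * q).eval μ₀ = 1 := by
      simpa [hpeval] using congrArg (Polynomial.eval μ₀) hab
    rw [hPdef, aux_aeval_mulVec L hv₀eig, heval, one_smul]
  have hPne : P ≠ 0 := fun h => hv₀ (by rw [← hPv₀, h, Matrix.zero_mulVec])
  set σ : ℝ := if 0 ≤ μ₀.im then -1 else 1 with hσdef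
  set c : ℂ := ((σ * (2 * Real.pi / Ts) : ℝ) : ℂ) * Complex.I with hcdef
  have hcim : c.im = σ * (2 * Real.pi / Ts) := by simp [hcdef]
  have hσne : σ ≠ 0 := by rw [hσdef]; split <;> norm_num
  have h2πTs : (0:ℝ) < 2 * Real.pi / Ts := by positivity
  have hcne : c ≠ 0 := by
    intro h
    have h' := congrArg Complex.im h
    rw [hcim, Complex.zero_im] at h'
    rcases mul_eq_zero.mp h' with h'' | h''
    · exact hσne h''
    · exact h2πTs.ne' h''
  refine ⟨L + c • P, ?_, ?_, ?_⟩
  · intro h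
    have h0 : c • P = 0 := by
      have := congrArg (fun A => A - L) h
      simpa [add_sub_cancel_left] using this
    rcases smul_eq_zero.mp h0 with h' | h'
    · exact hcne h'
    · exact hPne h'
  · have hsmul : (Ts : ℂ) • (L + c • P) = (Ts : ℂ) • L + ((Ts : ℂ) * c) • P := by
      rw [smul_add, smul_smul]
    have hcommTs : Commute ((Ts : ℂ) • L) (((Ts : ℂ) * c) • P) :=
      Commute.smul_left (Commute.smul_right hcomm _) _
    have hexpc : Complex.exp ((Ts : ℂ) * c) = 1 := by
      have hTsne : (Ts : ℂ) ≠ 0 := by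
        exact_mod_cast (ne_of_gt hTs)
      have h1 : (Ts : ℂ) * c = ((σ : ℂ) * (2 * (Real.pi : ℂ))) * Complex.I := by
        rw [hcdef]
        push_cast
        field_simp
      rw [h1, hσdef]
      by_cases h0 : 0 ≤ μ₀.im
      · rw [if_pos h0]
        push_cast
        rw [show ((-1 : ℂ)) * (2 * (Real.pi : ℂ)) * Complex.I
            = -(2 * (Real.pi : ℂ) * Complex.I) by ring,
          Complex.exp_neg, Complex.exp_two_pi_mul_I, inv_one]
      · rw [if_neg h0]
        push_cast
        rw [show ((1 : ℂ)) * (2 * (Real.pi : ℂ)) * Complex.I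
            = 2 * (Real.pi : ℂ) * Complex.I by ring,
          Complex.exp_two_pi_mul_I]
    rw [hsmul, Matrix.exp_add_of_commute _ _ hcommTs, aux_matrix_exp_idem P hP2 _ hexpc, mul_one]
  · intro μ hμ
    obtain ⟨v, hv, hveig⟩ := (aux_mem_spectrum_iff _ μ).mp hμ
    have hLv : L *ᵥ v = μ • v - c • (P *ᵥ v) := by
      rw [Matrix.add_mulVec, Matrix.smul_mulVec] at hveig
      rw [← hveig]
      abel
    by_cases hw : P *ᵥ v = 0
    · have : L *ᵥ v = μ • v := by rw [hLv, hw, smul_zero, sub_zero]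
      exact hbound μ ((aux_mem_spectrum_iff L μ).mpr ⟨v, hv, this⟩)
    · have hLw : L *ᵥ (P *ᵥ v) = (μ - c) • (P *ᵥ v) := by
        rw [Matrix.mulVec_mulVec, hcomm, ← Matrix.mulVec_mulVec, hLv, Matrix.mulVec_sub,
          Matrix.mulVec_smul, Matrix.mulVec_smul, Matrix.mulVec_mulVec, hP2, sub_smul]
      have hzero : (0 : Fin n → ℂ) = p.eval (μ - c) • (P *ᵥ v) := by
        have h1 := aux_aeval_mulVec L hLw p
        rw [Matrix.mulVec_mulVec, hkill, Matrix.zero_mulVec] at h1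
        exact h1
      have hev : p.eval (μ - c) = 0 := by
        rcases smul_eq_zero.mp hzero.symm with h' | h'
        · exact h'
        · exact absurd h' hw
      have hμeq : μ = μ₀ + c := by
        rw [hpdef] at hev
        simp only [Polynomial.eval_pow, Polynomial.eval_sub, Polynomial.eval_X,
          Polynomial.eval_C] at hev
        have := pow_eq_zero_iff hkpos.ne' |>.mp hev
        have h2 : μ - c = μ₀ := sub_eq_zero.mp this
        linear_combination h2
      have hμim : μ.im = μ₀.im + σ * (2 * Real.pi / Ts) := by
        rw [hμeq, Complex.add_im, hcim]
      have hμ₀M : |μ₀.im| ≤ M := hbound μ₀ hμ₀S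
      have hdiv : 2 * Real.pi / Ts = 2 * (Real.pi / Ts) := by ring
      rw [abs_le]
      by_cases h0 : 0 ≤ μ₀.im
      · have hσ1 : σ = -1 := by rw [hσdef, if_pos h0]
        have habs : |μ₀.im| = μ₀.im := abs_of_nonneg h0
        rw [habs] at hμ₀M hμ₀im
        rw [hμim, hσ1]
        constructor <;> linarith [hMπ, hπTs, hμ₀im, hμ₀M, hdiv]
      · have hσ1 : σ = 1 := by rw [hσdef, if_neg h0]
        push_neg at h0
        have habs : |μ₀.im| = -μ₀.im := abs_of_neg h0
        rw [habs] at hμ₀M hμ₀im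
        rw [hμim, hσ1]
        constructor <;> linarith [hMπ, hπTs, hμ₀im, hμ₀M, hdiv]
end
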